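/- A graph H with v_H ≥ 3 vertices is balanced if and only if λ*(H) = λ(H), where λ(H) = (e_H-2)/(v_H-2), λ*(H) = min over subgraphs F with 2 ≤ v_F < v_H of (e_H - e_F - 1)/(v_H - v_F), and balanced means (e_F-1)/(v_F-2) ≤ λ(H) for all subgraphs F with 3 ≤ v_F < v_H. -/

import Mathlib

/-!
Deleting a subgraph `F` splits `λ(H) = (e_H - 2)/(v_H - 2)` as the mediant of
`(e_F - 1)/(v_F - 2)` and `(e_H - e_F - 1)/(v_H - v_F)`, so the first ratio is at most `λ(H)`
exactly when the second is at least `λ(H)`. Subgraphs on two vertices, which balancedness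
ignores, have at most one edge and satisfy the second inequality anyway, and a single edge
attains `λ(H)`; hence `λ*(H) = λ(H)` precisely when `H` is balanced.
-/

/-- `lam H` is the adjusted edge-per-vertex ratio `(e_H - 2)/(v_H - 2)`. -/
noncomputable def lam {V : Type*} [Fintype V] (H : SimpleGraph V) : ℝ :=
  ((H.edgeSet.ncard : ℝ) - 2) / ((Fintype.card V : ℝ) - 2)

/-- `lamStar H` is the infimum of `(e_H - e_F - 1)/(v_H - v_F)` over subgraphs `F`
with `2 ≤ v_F < v_H`. -/
noncomputable def lamStar {V : Type*} [Fintype V] (H : SimpleGraph V) : ℝ :=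
  sInf {x : ℝ | ∃ F : H.Subgraph, 2 ≤ F.verts.ncard ∧ F.verts.ncard < Fintype.card V ∧
    x = ((H.edgeSet.ncard : ℝ) - (F.edgeSet.ncard : ℝ) - 1) /
      ((Fintype.card V : ℝ) - (F.verts.ncard : ℝ))}

/-- `H` is balanced if `(e_F - 1)/(v_F - 2) ≤ lam H` for all subgraphs `F`
with `3 ≤ v_F < v_H`. -/
def GraphBalanced {V : Type*} [Fintype V] (H : SimpleGraph V) : Prop :=
  ∀ F : H.Subgraph, 3 ≤ F.verts.ncard → F.verts.ncard < Fintype.card V →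
    ((F.edgeSet.ncard : ℝ) - 1) / ((F.verts.ncard : ℝ) - 2) ≤ lam H

theorem div_le_add_div_add_iff_add_div_add_le_div {K : Type*} [Field K] [LinearOrder K]
    [IsStrictOrderedRing K] {a b c d : K} (hb : 0 < b) (hd : 0 < d) :
    a / b ≤ (a + c) / (b + d) ↔ (a + c) / (b + d) ≤ c / d := by
  rw [div_le_div_iff₀ hb (add_pos hb hd), div_le_div_iff₀ (add_pos hb hd) hd]
  constructor <;> intro h <;> linarith

theorem SimpleGraph.Subgraph.ncard_edgeSet_le_choose_two {V : Type*} [Finite V]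
    {G : SimpleGraph V} (F : G.Subgraph) : F.edgeSet.ncard ≤ F.verts.ncard.choose 2 := by
  classical
  have : Fintype F.verts := Fintype.ofFinite _
  calc F.edgeSet.ncard = (Sym2.map ((↑) : F.verts → V) '' F.coe.edgeSet).ncard := by
        rw [F.image_coe_edgeSet_coe]
    _ ≤ F.coe.edgeSet.ncard := Set.ncard_image_le (Set.toFinite _)
    _ = F.coe.edgeFinset.card := by rw [← Set.ncard_coe_finset, SimpleGraph.coe_edgeFinset]
    _ ≤ (Fintype.card F.verts).choose 2 := F.coe.card_edgeFinset_le_card_choose_two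
    _ = F.verts.ncard.choose 2 := by rw [← Nat.card_coe_set_eq, Nat.card_eq_fintype_card]

section

variable {V : Type*} [Fintype V] (H : SimpleGraph V)

theorem exists_subgraph_div_eq_lam (hV : 3 ≤ Fintype.card V) (hE : 1 ≤ H.edgeSet.ncard) :
    ∃ F : H.Subgraph, 2 ≤ F.verts.ncard ∧ F.verts.ncard < Fintype.card V ∧
      lam H = ((H.edgeSet.ncard : ℝ) - (F.edgeSet.ncard : ℝ) - 1) /
        ((Fintype.card V : ℝ) - (F.verts.ncard : ℝ)) := by
  obtain ⟨e, he⟩ := Set.nonempty_of_ncard_ne_zero (by omega : H.edgeSet.ncard ≠ 0)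
  induction e using Sym2.ind with
  | _ a b =>
    rw [SimpleGraph.mem_edgeSet] at he
    have hverts : (H.subgraphOfAdj he).verts.ncard = 2 := Set.ncard_pair he.ne
    refine ⟨H.subgraphOfAdj he, hverts.ge, by omega, ?_⟩
    rw [hverts, SimpleGraph.edgeSet_subgraphOfAdj, Set.ncard_singleton, lam]
    push_cast
    ring_nf

theorem lamStar_eq_lam_iff (hV : 3 ≤ Fintype.card V) (hE : 1 ≤ H.edgeSet.ncard) :
    lamStar H = lam H ↔ ∀ F : H.Subgraph, 2 ≤ F.verts.ncard → F.verts.ncard < Fintype.card V →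
      lam H ≤ ((H.edgeSet.ncard : ℝ) - (F.edgeSet.ncard : ℝ) - 1) /
        ((Fintype.card V : ℝ) - (F.verts.ncard : ℝ)) := by
  let ratio (F : H.Subgraph) : ℝ := ((H.edgeSet.ncard : ℝ) - (F.edgeSet.ncard : ℝ) - 1) /
    ((Fintype.card V : ℝ) - (F.verts.ncard : ℝ))
  have hbdd : BddBelow {x : ℝ | ∃ F : H.Subgraph, 2 ≤ F.verts.ncard ∧
      F.verts.ncard < Fintype.card V ∧ x = ratio F} :=
    ((Set.finite_range ratio).subset (by rintro x ⟨F, -, -, rfl⟩; exact ⟨F, rfl⟩)).bddBelow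
  constructor
  · intro h F h2 hlt
    rw [← h]
    exact csInf_le hbdd ⟨F, h2, hlt, rfl⟩
  · intro h
    refine IsLeast.csInf_eq ⟨exists_subgraph_div_eq_lam H hV hE, ?_⟩
    rintro x ⟨F, h2, hlt, rfl⟩
    exact h F h2 hlt

variable {H}

theorem div_le_lam_iff_lam_le_div (F : H.Subgraph) (h3 : 3 ≤ F.verts.ncard)
    (hlt : F.verts.ncard < Fintype.card V) :
    ((F.edgeSet.ncard : ℝ) - 1) / ((F.verts.ncard : ℝ) - 2) ≤ lam H ↔
      lam H ≤ ((H.edgeSet.ncard : ℝ) - (F.edgeSet.ncard : ℝ) - 1) /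
        ((Fintype.card V : ℝ) - (F.verts.ncard : ℝ)) := by
  have hF : (3 : ℝ) ≤ F.verts.ncard := by exact_mod_cast h3
  have hV : (F.verts.ncard : ℝ) < Fintype.card V := by exact_mod_cast hlt
  have hlam : lam H = ((F.edgeSet.ncard - 1) + (H.edgeSet.ncard - F.edgeSet.ncard - 1)) /
      ((F.verts.ncard - 2) + (Fintype.card V - F.verts.ncard)) := by
    rw [lam]; ring_nf
  rw [hlam]
  exact div_le_add_div_add_iff_add_div_add_le_div (by linarith) (by linarith)

theorem lam_le_div_of_ncard_verts_eq_two (F : H.Subgraph) (h2 : F.verts.ncard = 2)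
    (hlt : F.verts.ncard < Fintype.card V) :
    lam H ≤ ((H.edgeSet.ncard : ℝ) - (F.edgeSet.ncard : ℝ) - 1) /
      ((Fintype.card V : ℝ) - (F.verts.ncard : ℝ)) := by
  have hedge : (F.edgeSet.ncard : ℝ) ≤ 1 := by
    exact_mod_cast h2 ▸ F.ncard_edgeSet_le_choose_two
  have hV : (2 : ℝ) < Fintype.card V := by exact_mod_cast h2 ▸ hlt
  rw [lam, h2, Nat.cast_ofNat]
  exact div_le_div_of_nonneg_right (by linarith) (by linarith)

end

theorem stmt_2 {V : Type*} [Fintype V] (H : SimpleGraph V)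
    (hV : 3 ≤ Fintype.card V) (hE : 1 ≤ H.edgeSet.ncard) :
    GraphBalanced H ↔ lamStar H = lam H := by
  rw [lamStar_eq_lam_iff H hV hE]
  constructor
  · intro hbal F h2 hlt
    rcases h2.eq_or_lt with h2 | h3
    · exact lam_le_div_of_ncard_verts_eq_two F h2.symm hlt
    · exact (div_le_lam_iff_lam_le_div F h3 hlt).1 (hbal F h3 hlt)
  · intro h F h3 hlt
    exact (div_le_lam_iff_lam_le_div F h3 hlt).2 (h F (by omega) hlt)
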